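/- arXiv:1712.04690 — 2 statements merged into one kernel-verified Lean document; each statement's English description precedes it below -/
import Mathlib

section
/- (Weak duality for gauge optimization) If x ∈ ℝ^n is feasible for (P), i.e. Ax = b, Hx + KG(x) ≤ p and x ∈ dom G, and (u,v) ∈ ℝ^k × ℝ^ℓ is feasible for (D), i.e. G°(Aᵀu − Hᵀv − c) − Kᵀv ≤ d and v ≥ 0, then cᵀx + dᵀG(x) ≥ bᵀu − pᵀv. -/
open Matrix

/-- The polar of a gauge (positively homogeneous) function:
`g°(y) := sup { xᵀy : g(x) ≤ 1 }`. -/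
noncomputable def polar {ι : Type*} [Fintype ι] (g : (ι → ℝ) → EReal) (y : ι → ℝ) : EReal :=
  sSup {r : EReal | ∃ x : ι → ℝ, g x ≤ 1 ∧ r = ((x ⬝ᵥ y : ℝ) : EReal)}

/-- `g : ℝ^q → ℝ ∪ {∞}` (modelled with values in `EReal`) is a gauge function:
convex, nonnegative, positively homogeneous, and `g(0) = 0`. -/
def IsGauge {ι : Type*} [Fintype ι] (g : (ι → ℝ) → EReal) : Prop :=
  (∀ x y : ι → ℝ, ∀ t : ℝ, 0 < t → t < 1 →
      g (t • x + (1 - t) • y) ≤ (t : EReal) * g x + ((1 - t : ℝ) : EReal) * g y) ∧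
  (∀ x, 0 ≤ g x) ∧
  (∀ (x : ι → ℝ) (lam : ℝ), 0 < lam → g (lam • x) = (lam : EReal) * g x) ∧
  g 0 = 0

/-- The (real) vector `G(x) = (g_1(x_{I_1}), …, g_m(x_{I_m}))`, for `x ∈ dom G`.
The partition `I_1, …, I_m` of the coordinates is modelled by the index type
`(i : Fin m) × Fin (nn i)`. -/
noncomputable def GR {m : ℕ} {nn : Fin m → ℕ} (g : (i : Fin m) → (Fin (nn i) → ℝ) → EReal)
    (x : ((i : Fin m) × Fin (nn i)) → ℝ) : Fin m → ℝ :=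
  fun i => (g i (fun j => x ⟨i, j⟩)).toReal

/-- `x ∈ dom G`, i.e. `g_i(x_{I_i}) < ∞` for all `i`. -/
def domG {m : ℕ} {nn : Fin m → ℕ} (g : (i : Fin m) → (Fin (nn i) → ℝ) → EReal)
    (x : ((i : Fin m) × Fin (nn i)) → ℝ) : Prop :=
  ∀ i, g i (fun j => x ⟨i, j⟩) ≠ ⊤

/-- Feasibility for the gauge problem (P): `Ax = b`, `Hx + KG(x) ≤ p`, `x ∈ dom G`. -/
def feasP {m k l : ℕ} {nn : Fin m → ℕ} (g : (i : Fin m) → (Fin (nn i) → ℝ) → EReal)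
    (b : Fin k → ℝ) (p : Fin l → ℝ)
    (A : Matrix (Fin k) ((i : Fin m) × Fin (nn i)) ℝ)
    (H : Matrix (Fin l) ((i : Fin m) × Fin (nn i)) ℝ) (K : Matrix (Fin l) (Fin m) ℝ)
    (x : ((i : Fin m) × Fin (nn i)) → ℝ) : Prop :=
  A *ᵥ x = b ∧ (∀ j, (H *ᵥ x) j + (K *ᵥ GR g x) j ≤ p j) ∧ domG g x

/-- Objective of the gauge problem (P): `cᵀx + dᵀG(x)`. -/
noncomputable def objP {m : ℕ} {nn : Fin m → ℕ} (g : (i : Fin m) → (Fin (nn i) → ℝ) → EReal)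
    (c : ((i : Fin m) × Fin (nn i)) → ℝ) (d : Fin m → ℝ)
    (x : ((i : Fin m) × Fin (nn i)) → ℝ) : ℝ :=
  c ⬝ᵥ x + d ⬝ᵥ GR g x

/-- Feasibility for the gauge dual (D): `G°(Aᵀu − Hᵀv − c) − Kᵀv ≤ d` and `v ≥ 0`. -/
def feasD {m k l : ℕ} {nn : Fin m → ℕ} (g : (i : Fin m) → (Fin (nn i) → ℝ) → EReal)
    (c : ((i : Fin m) × Fin (nn i)) → ℝ) (d : Fin m → ℝ)
    (A : Matrix (Fin k) ((i : Fin m) × Fin (nn i)) ℝ)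
    (H : Matrix (Fin l) ((i : Fin m) × Fin (nn i)) ℝ) (K : Matrix (Fin l) (Fin m) ℝ)
    (u : Fin k → ℝ) (v : Fin l → ℝ) : Prop :=
  (∀ i, polar (g i) (fun j => (Aᵀ *ᵥ u - Hᵀ *ᵥ v - c) ⟨i, j⟩) ≤
      ((d i + (Kᵀ *ᵥ v) i : ℝ) : EReal)) ∧ ∀ j, 0 ≤ v j

lemma block_ineq' {ι : Type*} [Fintype ι] (g : (ι → ℝ) → EReal) (hg : IsGauge g)
    (xi y : ι → ℝ) (C : ℝ) (hxi : g xi ≠ ⊤) (hC : polar g y ≤ (C : EReal)) :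
    xi ⬝ᵥ y ≤ (g xi).toReal * C := by
  obtain ⟨hconv, hpos, hhom, h0⟩ := hg
  have hmem : ∀ z : ι → ℝ, g z ≤ 1 → z ⬝ᵥ y ≤ C := by
    intro z hz
    have h1 : ((z ⬝ᵥ y : ℝ) : EReal) ≤ polar g y := le_sSup ⟨z, hz, rfl⟩
    exact_mod_cast h1.trans hC
  set t := (g xi).toReal with ht
  have hnb : g xi ≠ ⊥ := ((lt_of_lt_of_le EReal.bot_lt_zero (hpos xi)).ne')
  have hgx : g xi = (t : EReal) := (EReal.coe_toReal hxi hnb).symm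
  have ht0 : 0 ≤ t := by
    have h2 := hpos xi
    rw [hgx] at h2
    exact_mod_cast h2
  rcases eq_or_lt_of_le ht0 with h | h
  · have hC0 : (0:ℝ) ≤ C := by
      have := hmem 0 (by rw [h0]; exact zero_le_one)
      simpa using this
    have hle : xi ⬝ᵥ y ≤ 0 := by
      by_contra hpos'
      push_neg at hpos'
      set s := xi ⬝ᵥ y
      have hlam : (0:ℝ) < (C + 1) / s := by positivity
      have hz : g (((C + 1) / s) • xi) ≤ 1 := by
        rw [hhom xi _ hlam, hgx, ← h]
        simp
      have h1 := hmem _ hz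
      rw [smul_dotProduct, smul_eq_mul, div_mul_cancel₀ _ (ne_of_gt hpos')] at h1
      linarith
    calc xi ⬝ᵥ y ≤ 0 := hle
      _ = t * C := by rw [← h]; ring
  · have hz : g (t⁻¹ • xi) ≤ 1 := by
      rw [hhom xi _ (by positivity), hgx, ← EReal.coe_mul, inv_mul_cancel₀ (ne_of_gt h)]
      simp
    have h1 := hmem _ hz
    rw [smul_dotProduct, smul_eq_mul] at h1
    have h2 := mul_le_mul_of_nonneg_left h1 (le_of_lt h)
    calc xi ⬝ᵥ y = t * (t⁻¹ * (xi ⬝ᵥ y)) := by field_simp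
      _ ≤ t * C := h2


/-- Weak duality for gauge optimization: if `x` is feasible for (P) and
`(u,v)` is feasible for (D), then `cᵀx + dᵀG(x) ≥ bᵀu − pᵀv`. -/
theorem weak_duality_gauge {m k l : ℕ} (nn : Fin m → ℕ)
    (g : (i : Fin m) → (Fin (nn i) → ℝ) → EReal) (hg : ∀ i, IsGauge (g i))
    (c : ((i : Fin m) × Fin (nn i)) → ℝ) (d : Fin m → ℝ) (b : Fin k → ℝ) (p : Fin l → ℝ)
    (A : Matrix (Fin k) ((i : Fin m) × Fin (nn i)) ℝ)
    (H : Matrix (Fin l) ((i : Fin m) × Fin (nn i)) ℝ) (K : Matrix (Fin l) (Fin m) ℝ)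
    (x : ((i : Fin m) × Fin (nn i)) → ℝ) (u : Fin k → ℝ) (v : Fin l → ℝ)
    (hx : feasP g b p A H K x) (huv : feasD g c d A H K u v) :
    b ⬝ᵥ u - p ⬝ᵥ v ≤ objP g c d x := by
  obtain ⟨hAx, hHx, hdom⟩ := hx
  obtain ⟨hpolar, hv⟩ := huv
  set y : ((i : Fin m) × Fin (nn i)) → ℝ := Aᵀ *ᵥ u - Hᵀ *ᵥ v - c with hy
  -- blockwise inequality
  have key : ∀ i, (fun j => x ⟨i, j⟩) ⬝ᵥ (fun j => y ⟨i, j⟩) ≤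
      GR g x i * (d i + (Kᵀ *ᵥ v) i) := fun i =>
    block_ineq' (g i) (hg i) _ _ _ (hdom i) (hpolar i)
  -- sum over blocks
  have hsum : x ⬝ᵥ y ≤ GR g x ⬝ᵥ (fun i => d i + (Kᵀ *ᵥ v) i) := by
    unfold dotProduct
    rw [← Finset.univ_sigma_univ, Finset.sum_sigma]
    exact Finset.sum_le_sum (fun i _ => key i)
  -- matrix identities
  have e1 : x ⬝ᵥ (Aᵀ *ᵥ u) = b ⬝ᵥ u := by
    rw [dotProduct_mulVec, vecMul_transpose, hAx]
  have e2 : x ⬝ᵥ (Hᵀ *ᵥ v) = (H *ᵥ x) ⬝ᵥ v := by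
    rw [dotProduct_mulVec, vecMul_transpose]
  have e3 : GR g x ⬝ᵥ (Kᵀ *ᵥ v) = (K *ᵥ GR g x) ⬝ᵥ v := by
    rw [dotProduct_mulVec, vecMul_transpose]
  have e4 : x ⬝ᵥ y = b ⬝ᵥ u - (H *ᵥ x) ⬝ᵥ v - x ⬝ᵥ c := by
    rw [hy, dotProduct_sub, dotProduct_sub, e1, e2]
  have e5 : GR g x ⬝ᵥ (fun i => d i + (Kᵀ *ᵥ v) i) =
      GR g x ⬝ᵥ d + (K *ᵥ GR g x) ⬝ᵥ v := by
    rw [← e3, ← dotProduct_add]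
    rfl
  -- v-part
  have hpv : (H *ᵥ x) ⬝ᵥ v + (K *ᵥ GR g x) ⬝ᵥ v ≤ p ⬝ᵥ v := by
    rw [← add_dotProduct]
    exact Finset.sum_le_sum (fun j _ => mul_le_mul_of_nonneg_right (hHx j) (hv j))
  have hc : x ⬝ᵥ c = c ⬝ᵥ x := dotProduct_comm _ _
  have hd : GR g x ⬝ᵥ d = d ⬝ᵥ GR g x := dotProduct_comm _ _
  rw [e4, e5] at hsum
  unfold objP
  linarith [hsum]
end

section
/- (Sufficient optimality conditions) Points x* ∈ ℝ^n and (u*, v*) ∈ ℝ^k × ℝ^ℓ are optimal solutions of (P) and (D), respectively, if the following hold: (i) primal feasibility: Ax* = b, Hx* + KG(x*) ≤ p, x* ∈ dom G; (ii) dual feasibility: G°(Aᵀu* − Hᵀv* − c) − Kᵀv* ≤ d and v* ≥ 0; (iii) complementarity: [d + Kᵀv* − G°(Aᵀu* − Hᵀv* − c)]_i · g_i(x*_{I_i}) = 0 for i = 1,…,m; (iv) complementarity: [p − Hx* − KG(x*)]_i · v*_i = 0 for every component i; (v) alignment: G°(Aᵀu* − Hᵀv* − c)ᵀ G(x*) =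 (Aᵀu* − Hᵀv* − c)ᵀ x*. -/
open Matrix

lemma ecoe_sum {ι : Type*} (s : Finset ι) (f : ι → ℝ) :
    ((∑ i ∈ s, f i : ℝ) : EReal) = ∑ i ∈ s, ((f i : ℝ) : EReal) := by
  classical
  induction s using Finset.cons_induction with
  | empty => simp
  | cons a s ha ih => rw [Finset.sum_cons, Finset.sum_cons, EReal.coe_add, ih]

lemma polar_nonneg' {ι : Type*} [Fintype ι] {g : (ι → ℝ) → EReal} (hg0 : g 0 = 0)
    (y : ι → ℝ) : 0 ≤ polar g y := by
  apply le_sSup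
  exact ⟨0, by simp [hg0], by simp⟩

lemma etoReal_nonneg {x : EReal} (h : 0 ≤ x) (hx : x ≠ ⊤) : 0 ≤ x.toReal := by
  have := EReal.toReal_le_toReal h (by simp) hx
  simpa using this

lemma dot_le_of_polar_le {ι : Type*} [Fintype ι] {g : (ι → ℝ) → EReal} (hg : IsGauge g)
    {x y : ι → ℝ} {D : ℝ} (hx : g x ≠ ⊤) (hD : polar g y ≤ (D : EReal)) :
    x ⬝ᵥ y ≤ (g x).toReal * D := by
  obtain ⟨-, hnn, hhom, h0⟩ := hg
  have hDnn : 0 ≤ D := by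
    have := (polar_nonneg' h0 y).trans hD
    exact_mod_cast this
  have hne_bot : g x ≠ ⊥ :=
    (lt_of_lt_of_le (by simp : (⊥ : EReal) < 0) (hnn x)).ne'
  have hgx : g x = (((g x).toReal : ℝ) : EReal) := (EReal.coe_toReal hx hne_bot).symm
  set r := (g x).toReal with hr
  have hrnn : 0 ≤ r := etoReal_nonneg (hnn x) hx
  rcases eq_or_lt_of_le hrnn with h0r | h0r
  · -- r = 0 case
    have key : ∀ t : ℝ, 0 < t → t * (x ⬝ᵥ y) ≤ D := by
      intro t ht
      have hmem : (((t • x) ⬝ᵥ y : ℝ) : EReal) ≤ polar g y := by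
        apply le_sSup
        refine ⟨t • x, ?_, rfl⟩
        rw [hhom x t ht, hgx, ← h0r]
        simp
      have h2 : ((t • x) ⬝ᵥ y : ℝ) ≤ D := by exact_mod_cast hmem.trans hD
      simpa [smul_dotProduct] using h2
    have hxy : x ⬝ᵥ y ≤ 0 := by
      by_contra hcon
      push_neg at hcon
      have := key ((D + 1) / (x ⬝ᵥ y)) (by positivity)
      rw [div_mul_cancel₀ _ (ne_of_gt hcon)] at this
      linarith
    rw [← h0r]
    simpa using hxy
  · -- r > 0 case
    have hz : g (r⁻¹ • x) ≤ 1 := by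
      rw [hhom x r⁻¹ (inv_pos.2 h0r), hgx, ← EReal.coe_mul,
        inv_mul_cancel₀ (ne_of_gt h0r)]
      exact le_of_eq EReal.coe_one
    have hmem : (((r⁻¹ • x) ⬝ᵥ y : ℝ) : EReal) ≤ polar g y := le_sSup ⟨_, hz, rfl⟩
    have h2 : ((r⁻¹ • x) ⬝ᵥ y : ℝ) ≤ D := by exact_mod_cast hmem.trans hD
    have h3 : r⁻¹ * (x ⬝ᵥ y) ≤ D := by simpa [smul_dotProduct] using h2
    have h4 : x ⬝ᵥ y = r * (r⁻¹ * (x ⬝ᵥ y)) := by field_simp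
    rw [h4]
    exact mul_le_mul_of_nonneg_left h3 hrnn
lemma weak_duality {m k l : ℕ} {nn : Fin m → ℕ}
    {g : (i : Fin m) → (Fin (nn i) → ℝ) → EReal} (hg : ∀ i, IsGauge (g i))
    {c : ((i : Fin m) × Fin (nn i)) → ℝ} {d : Fin m → ℝ} {b : Fin k → ℝ} {p : Fin l → ℝ}
    {A : Matrix (Fin k) ((i : Fin m) × Fin (nn i)) ℝ}
    {H : Matrix (Fin l) ((i : Fin m) × Fin (nn i)) ℝ} {K : Matrix (Fin l) (Fin m) ℝ}
    {x : ((i : Fin m) × Fin (nn i)) → ℝ} (hx : feasP g b p A H K x)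
    {u : Fin k → ℝ} {v : Fin l → ℝ} (huv : feasD g c d A H K u v) :
    b ⬝ᵥ u - p ⬝ᵥ v ≤ objP g c d x := by
  obtain ⟨hAx, hHx, hdom⟩ := hx
  obtain ⟨hpol, hv⟩ := huv
  set w' := Aᵀ *ᵥ u - Hᵀ *ᵥ v - c with hw'
  set Gx := GR g x with hGx
  have step1 : v ⬝ᵥ (H *ᵥ x) + v ⬝ᵥ (K *ᵥ Gx) ≤ p ⬝ᵥ v := by
    have h1 : ∑ j, ((H *ᵥ x) j + (K *ᵥ Gx) j) * v j ≤ ∑ j, p j * v j :=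
      Finset.sum_le_sum fun j _ => mul_le_mul_of_nonneg_right (hHx j) (hv j)
    have h2 : ∑ j, ((H *ᵥ x) j + (K *ᵥ Gx) j) * v j
        = v ⬝ᵥ (H *ᵥ x) + v ⬝ᵥ (K *ᵥ Gx) := by
      simp [dotProduct, add_mul, Finset.sum_add_distrib, mul_comm, mul_add]
    rw [h2] at h1
    simpa [dotProduct] using h1
  have hblock : ∀ i, (fun j => x ⟨i, j⟩) ⬝ᵥ (fun j => w' ⟨i, j⟩)
      ≤ Gx i * (d i + (Kᵀ *ᵥ v) i) :=
    fun i => dot_le_of_polar_le (hg i) (hdom i) (hpol i)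
  have hsplit : x ⬝ᵥ w' = ∑ i, (fun j => x ⟨i, j⟩) ⬝ᵥ (fun j => w' ⟨i, j⟩) := by
    rw [dotProduct, ← Finset.univ_sigma_univ, Finset.sum_sigma]
    rfl
  have hsum : x ⬝ᵥ w' ≤ d ⬝ᵥ Gx + (Kᵀ *ᵥ v) ⬝ᵥ Gx := by
    have h1 : x ⬝ᵥ w' ≤ ∑ i, Gx i * (d i + (Kᵀ *ᵥ v) i) := by
      rw [hsplit]; exact Finset.sum_le_sum fun i _ => hblock i
    have h2 : ∑ i, Gx i * (d i + (Kᵀ *ᵥ v) i) = d ⬝ᵥ Gx + (Kᵀ *ᵥ v) ⬝ᵥ Gx := by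
      simp [dotProduct, mul_add, Finset.sum_add_distrib, mul_comm]
    linarith
  have hA : (Aᵀ *ᵥ u) ⬝ᵥ x = b ⬝ᵥ u := by
    rw [Matrix.mulVec_transpose, ← Matrix.dotProduct_mulVec, hAx, dotProduct_comm]
  have hH : (Hᵀ *ᵥ v) ⬝ᵥ x = v ⬝ᵥ (H *ᵥ x) := by
    rw [Matrix.mulVec_transpose, ← Matrix.dotProduct_mulVec]
  have hK : (Kᵀ *ᵥ v) ⬝ᵥ Gx = v ⬝ᵥ (K *ᵥ Gx) := by
    rw [Matrix.mulVec_transpose, ← Matrix.dotProduct_mulVec]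
  have hw'x : x ⬝ᵥ w' = (Aᵀ *ᵥ u) ⬝ᵥ x - (Hᵀ *ᵥ v) ⬝ᵥ x - c ⬝ᵥ x := by
    rw [hw']
    simp [dotProduct_sub, dotProduct_comm x]
  have hobj : objP g c d x = c ⬝ᵥ x + d ⬝ᵥ Gx := rfl
  linarith

/-- Sufficient optimality conditions: `x*` and `(u*, v*)` are optimal for
(P) and (D) respectively whenever (i) primal feasibility, (ii) dual feasibility,
(iii)–(iv) complementarity, and (v) alignment hold.
Here `w = Aᵀu* − Hᵀv* − c`. -/
theorem sufficient_optimality_gauge {m k l : ℕ} (nn : Fin m → ℕ)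
    (g : (i : Fin m) → (Fin (nn i) → ℝ) → EReal) (hg : ∀ i, IsGauge (g i))
    (c : ((i : Fin m) × Fin (nn i)) → ℝ) (d : Fin m → ℝ) (b : Fin k → ℝ) (p : Fin l → ℝ)
    (A : Matrix (Fin k) ((i : Fin m) × Fin (nn i)) ℝ)
    (H : Matrix (Fin l) ((i : Fin m) × Fin (nn i)) ℝ) (K : Matrix (Fin l) (Fin m) ℝ)
    (xstar : ((i : Fin m) × Fin (nn i)) → ℝ) (ustar : Fin k → ℝ) (vstar : Fin l → ℝ)
    (w : ((i : Fin m) × Fin (nn i)) → ℝ) (hw : w = Aᵀ *ᵥ ustar - Hᵀ *ᵥ vstar - c)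
    -- (i) primal feasibility
    (hprimal : feasP g b p A H K xstar)
    -- (ii) dual feasibility
    (hdual : feasD g c d A H K ustar vstar)
    -- (iii) complementarity
    (hcomp1 : ∀ i, (((d i + (Kᵀ *ᵥ vstar) i : ℝ) : EReal) -
        polar (g i) (fun j => w ⟨i, j⟩)) * g i (fun j => xstar ⟨i, j⟩) = 0)
    -- (iv) complementarity
    (hcomp2 : ∀ j, (p j - (H *ᵥ xstar) j - (K *ᵥ GR g xstar) j) * vstar j = 0)
    -- (v) alignment
    (halign : ∑ i, polar (g i) (fun j => w ⟨i, j⟩) * g i (fun j => xstar ⟨i, j⟩) =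
        ((w ⬝ᵥ xstar : ℝ) : EReal)) :
    (∀ x, feasP g b p A H K x → objP g c d xstar ≤ objP g c d x) ∧
    (∀ u v, feasD g c d A H K u v → b ⬝ᵥ u - p ⬝ᵥ v ≤ b ⬝ᵥ ustar - p ⬝ᵥ vstar) := by
  obtain ⟨hAx, hHx, hdom⟩ := hprimal
  obtain ⟨hpol, hv⟩ := hdual
  set Gx := GR g xstar with hGxdef
  -- polar values and gauge values at the star point, as reals
  have hpolw : ∀ i, polar (g i) (fun j => w ⟨i, j⟩) ≤ ((d i + (Kᵀ *ᵥ vstar) i : ℝ) : EReal) := by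
    intro i; rw [hw]; exact hpol i
  set P : Fin m → ℝ := fun i => (polar (g i) (fun j => w ⟨i, j⟩)).toReal with hPdef
  have hPnt : ∀ i, polar (g i) (fun j => w ⟨i, j⟩) ≠ ⊤ :=
    fun i => ne_top_of_le_ne_top (EReal.coe_ne_top _) (hpolw i)
  have hPnb : ∀ i, polar (g i) (fun j => w ⟨i, j⟩) ≠ ⊥ := by
    intro i
    exact (lt_of_lt_of_le (by simp : (⊥ : EReal) < 0)
      (polar_nonneg' (hg i).2.2.2 _)).ne'
  have hPc : ∀ i, polar (g i) (fun j => w ⟨i, j⟩) = ((P i : ℝ) : EReal) :=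
    fun i => (EReal.coe_toReal (hPnt i) (hPnb i)).symm
  have hgnb : ∀ i, g i (fun j => xstar ⟨i, j⟩) ≠ ⊥ := by
    intro i
    exact (lt_of_lt_of_le (by simp : (⊥ : EReal) < 0) ((hg i).2.1 _)).ne'
  have hgc : ∀ i, g i (fun j => xstar ⟨i, j⟩) = ((Gx i : ℝ) : EReal) :=
    fun i => (EReal.coe_toReal (hdom i) (hgnb i)).symm
  -- real versions of complementarity (iii) and alignment (v)
  have hcomp1' : ∀ i, (d i + (Kᵀ *ᵥ vstar) i - P i) * Gx i = 0 := by
    intro i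
    have h := hcomp1 i
    rw [hPc i, hgc i, ← EReal.coe_sub, ← EReal.coe_mul] at h
    exact_mod_cast h
  have halign' : ∑ i, P i * Gx i = w ⬝ᵥ xstar := by
    have h := halign
    rw [Finset.sum_congr rfl (fun i _ => by rw [hPc i, hgc i, ← EReal.coe_mul]),
      ← ecoe_sum] at h
    exact_mod_cast h
  -- ∑ (d + Kᵀv*) G = w ⬝ x*
  have hDG : ∑ i, (d i + (Kᵀ *ᵥ vstar) i) * Gx i = w ⬝ᵥ xstar := by
    rw [← halign']
    refine Finset.sum_congr rfl fun i _ => ?_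
    have := hcomp1' i
    linear_combination this
  have hDGexp : ∑ i, (d i + (Kᵀ *ᵥ vstar) i) * Gx i = d ⬝ᵥ Gx + (Kᵀ *ᵥ vstar) ⬝ᵥ Gx := by
    simp [dotProduct, add_mul, Finset.sum_add_distrib]
  -- real version of complementarity (iv)
  have hcomp2' : p ⬝ᵥ vstar = vstar ⬝ᵥ (H *ᵥ xstar) + vstar ⬝ᵥ (K *ᵥ Gx) := by
    have h0 : ∑ j, (p j - (H *ᵥ xstar) j - (K *ᵥ Gx) j) * vstar j = 0 :=
      Finset.sum_eq_zero fun j _ => hcomp2 j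
    have h1 : ∑ j, (p j - (H *ᵥ xstar) j - (K *ᵥ Gx) j) * vstar j
        = p ⬝ᵥ vstar - vstar ⬝ᵥ (H *ᵥ xstar) - vstar ⬝ᵥ (K *ᵥ Gx) := by
      simp [dotProduct, sub_mul, mul_sub, Finset.sum_sub_distrib, mul_comm]
    linarith [h1 ▸ h0]
  -- matrix transpose identities
  have hA : (Aᵀ *ᵥ ustar) ⬝ᵥ xstar = b ⬝ᵥ ustar := by
    rw [Matrix.mulVec_transpose, ← Matrix.dotProduct_mulVec, hAx, dotProduct_comm]
  have hH : (Hᵀ *ᵥ vstar) ⬝ᵥ xstar = vstar ⬝ᵥ (H *ᵥ xstar) := by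
    rw [Matrix.mulVec_transpose, ← Matrix.dotProduct_mulVec]
  have hK : (Kᵀ *ᵥ vstar) ⬝ᵥ Gx = vstar ⬝ᵥ (K *ᵥ Gx) := by
    rw [Matrix.mulVec_transpose, ← Matrix.dotProduct_mulVec]
  have hwx : w ⬝ᵥ xstar
      = (Aᵀ *ᵥ ustar) ⬝ᵥ xstar - (Hᵀ *ᵥ vstar) ⬝ᵥ xstar - c ⬝ᵥ xstar := by
    rw [hw]
    simp [sub_dotProduct]
  -- the key equality: objP x* = bᵀu* − pᵀv*
  have hkey : objP g c d xstar = b ⬝ᵥ ustar - p ⬝ᵥ vstar := by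
    have hobj : objP g c d xstar = c ⬝ᵥ xstar + d ⬝ᵥ Gx := rfl
    linarith
  constructor
  · intro x hx
    have := weak_duality hg hx ⟨hpol, hv⟩
    linarith
  · intro u v huv
    have := weak_duality hg ⟨hAx, hHx, hdom⟩ huv
    linarith
end
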